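/- For every countable group G there exists a set R of positive words of length at most 3 in the free group on generators {gₙ : n ∈ ℕ} presenting G, such that for each n, the generator gₙ occurs in at most four relators of R. -/

import Mathlib

/-- The generator with index `i` occurs as a letter of the word `w` in the free group on `ℕ`. -/
def Occurs (i : ℕ) (w : FreeGroup ℕ) : Prop := ∃ p ∈ w.toWord, p.1 = i

/-- `w` is a product of at most three generators (no inverses) of the free group on `ℕ`. -/
def IsPosWordLen3 (w : FreeGroup ℕ) : Prop :=
  (∃ i, w = FreeGroup.of i) ∨
  (∃ i j, w = FreeGroup.of i * FreeGroup.of j) ∨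
  (∃ i j k, w = FreeGroup.of i * FreeGroup.of j * FreeGroup.of k)

/-!
Let `f : ℕ → G` be onto with section `s`. Take letters `copy n t`, all standing for `f n`, and
`invCopy n t`, with relators `copy n t * invCopy n t` and `invCopy n t * copy n (t + 1)`, which
identify all copies of `f n` and make `invCopy n t` their inverse, plus one multiplication-table
relator `copy m _ * copy n _ * invCopy (s (f m * f n)) _` for each pair `(m, n)`. The table
relator indexed by `p = pair m n` spends the fresh letters `copy m (2 * p)`, `copy n (2 * p + 1)`
and `invCopy (s (f m * f n)) p`, so each letter lies in at most three relators. The table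
relators make `g ↦ copy (s g) 0` a homomorphism, inverse to the evaluation `copy n t ↦ f n`.
-/

lemma finite_and_ncard_le_three_of_subset {α : Type*} {S : Set α} {a b c : α}
    (h : S ⊆ {a, b, c}) : S.Finite ∧ S.ncard ≤ 3 := by
  classical
  have h' : S ⊆ (({a, b, c} : Finset α) : Set α) := by simpa using h
  exact ⟨(Finset.finite_toSet _).subset h',
    (Set.ncard_le_ncard h' (Finset.finite_toSet _)).trans
      ((Set.ncard_coe_finset _).trans_le Finset.card_le_three)⟩

lemma occurs_of_mul_of_iff {i a b : ℕ} :
    Occurs i (FreeGroup.of a * FreeGroup.of b) ↔ a = i ∨ b = i := by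
  simp [Occurs, FreeGroup.toWord_mul, FreeGroup.toWord_of, FreeGroup.reduce]

lemma occurs_of_mul_of_mul_of_iff {i a b c : ℕ} :
    Occurs i (FreeGroup.of a * FreeGroup.of b * FreeGroup.of c) ↔ a = i ∨ b = i ∨ c = i := by
  simp [Occurs, FreeGroup.toWord_mul, FreeGroup.toWord_of, FreeGroup.reduce]

namespace CountablePresentation

open Function

def copy (n t : ℕ) : FreeGroup ℕ := FreeGroup.of (2 * Nat.pair n t)

def invCopy (n t : ℕ) : FreeGroup ℕ := FreeGroup.of (2 * Nat.pair n t + 1)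

variable {G : Type*} [Group G] (f : ℕ → G) (s : G → ℕ)

def tableRelator (m n : ℕ) : FreeGroup ℕ :=
  copy m (2 * Nat.pair m n) * copy n (2 * Nat.pair m n + 1) *
    invCopy (s (f m * f n)) (Nat.pair m n)

def relators : Set (FreeGroup ℕ) :=
  {w | (∃ n t, w = copy n t * invCopy n t) ∨ (∃ n t, w = invCopy n t * copy n (t + 1)) ∨
    ∃ m n, w = tableRelator f s m n}

def generatorValue (i : ℕ) : G :=
  if Even i then f (Nat.unpair (i / 2)).1 else (f (Nat.unpair (i / 2)).1)⁻¹

variable {f s}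

lemma isPosWordLen3_of_mem_relators {w : FreeGroup ℕ} (hw : w ∈ relators f s) :
    IsPosWordLen3 w := by
  rcases hw with ⟨n, t, rfl⟩ | ⟨n, t, rfl⟩ | ⟨m, n, rfl⟩
  · exact Or.inr (Or.inl ⟨_, _, rfl⟩)
  · exact Or.inr (Or.inl ⟨_, _, rfl⟩)
  · exact Or.inr (Or.inr ⟨_, _, _, rfl⟩)

variable (f s)

lemma occurrences_copy_subset (n t : ℕ) :
    {w ∈ relators f s | Occurs (2 * Nat.pair n t) w} ⊆
      {copy n t * invCopy n t, invCopy n (t - 1) * copy n t,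
        tableRelator f s (Nat.unpair (t / 2)).1 (Nat.unpair (t / 2)).2} := by
  rintro w ⟨⟨n', t', rfl⟩ | ⟨n', t', rfl⟩ | ⟨m, k, rfl⟩, ho⟩
  · rw [copy, invCopy, occurs_of_mul_of_iff] at ho
    obtain ⟨rfl, rfl⟩ : n' = n ∧ t' = t := Nat.pair_eq_pair.mp (by omega)
    exact Or.inl rfl
  · rw [copy, invCopy, occurs_of_mul_of_iff] at ho
    obtain ⟨rfl, rfl⟩ : n' = n ∧ t' + 1 = t := Nat.pair_eq_pair.mp (by omega)
    exact Or.inr (Or.inl rfl)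
  · rw [tableRelator, copy, copy, invCopy, occurs_of_mul_of_mul_of_iff] at ho
    have ht : t / 2 = Nat.pair m k := by
      rcases ho with h | h | h
      · obtain ⟨-, rfl⟩ := Nat.pair_eq_pair.mp
          (show Nat.pair m (2 * Nat.pair m k) = Nat.pair n t by omega)
        omega
      · obtain ⟨-, rfl⟩ := Nat.pair_eq_pair.mp
          (show Nat.pair k (2 * Nat.pair m k + 1) = Nat.pair n t by omega)
        omega
      · omega
    simp [ht]

lemma occurrences_invCopy_subset (n t : ℕ) :
    {w ∈ relators f s | Occurs (2 * Nat.pair n t + 1) w} ⊆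
      {copy n t * invCopy n t, invCopy n t * copy n (t + 1),
        tableRelator f s (Nat.unpair t).1 (Nat.unpair t).2} := by
  rintro w ⟨⟨n', t', rfl⟩ | ⟨n', t', rfl⟩ | ⟨m, k, rfl⟩, ho⟩
  · rw [copy, invCopy, occurs_of_mul_of_iff] at ho
    obtain ⟨rfl, rfl⟩ : n' = n ∧ t' = t := Nat.pair_eq_pair.mp (by omega)
    exact Or.inl rfl
  · rw [copy, invCopy, occurs_of_mul_of_iff] at ho
    obtain ⟨rfl, rfl⟩ : n' = n ∧ t' = t := Nat.pair_eq_pair.mp (by omega)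
    exact Or.inr (Or.inl rfl)
  · rw [tableRelator, copy, copy, invCopy, occurs_of_mul_of_mul_of_iff] at ho
    obtain ⟨-, rfl⟩ : s (f m * f k) = n ∧ Nat.pair m k = t := Nat.pair_eq_pair.mp (by omega)
    simp

lemma occurrences_finite_and_ncard_le_three (i : ℕ) :
    {w ∈ relators f s | Occurs i w}.Finite ∧ {w ∈ relators f s | Occurs i w}.ncard ≤ 3 := by
  obtain ⟨p, rfl | rfl⟩ := Nat.even_or_odd' i <;> rw [← Nat.pair_unpair p]
  · exact finite_and_ncard_le_three_of_subset (occurrences_copy_subset f s _ _)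
  · exact finite_and_ncard_le_three_of_subset (occurrences_invCopy_subset f s _ _)

section Presentation

variable {f s}

local notation "mk" => PresentedGroup.mk (relators f s)

lemma mk_invCopy (n t : ℕ) : mk (invCopy n t) = (mk (copy n t))⁻¹ := by
  refine eq_inv_of_mul_eq_one_right ?_
  rw [← map_mul]
  exact PresentedGroup.one_of_mem (Or.inl ⟨n, t, rfl⟩)

lemma mk_copy (n t : ℕ) : mk (copy n t) = mk (copy n 0) := by
  induction t with
  | zero => rfl
  | succ t ih =>
    have h : mk (invCopy n t * copy n (t + 1)) = 1 :=
      PresentedGroup.one_of_mem (Or.inr (Or.inl ⟨n, t, rfl⟩))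
    rw [map_mul, mk_invCopy, inv_mul_eq_one] at h
    rw [← h, ih]

lemma mk_copy_mul_mk_copy (m n : ℕ) :
    mk (copy m 0) * mk (copy n 0) = mk (copy (s (f m * f n)) 0) := by
  have h : mk (tableRelator f s m n) = 1 :=
    PresentedGroup.one_of_mem (Or.inr (Or.inr ⟨m, n, rfl⟩))
  rwa [tableRelator, map_mul, map_mul, mk_invCopy, mk_copy m, mk_copy n, mk_copy (s _),
    mul_inv_eq_one] at h

-- `f` need not be injective: the table row of `s 1` identifies the chains of `n` and `s (f n)`.
lemma mk_copy_section (hs : RightInverse s f) (n : ℕ) :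
    mk (copy (s (f n)) 0) = mk (copy n 0) := by
  have hone : mk (copy (s 1) 0) = 1 := by
    simpa [hs 1] using mk_copy_mul_mk_copy (f := f) (s := s) (s 1) (s 1)
  simpa [hs 1, hone] using (mk_copy_mul_mk_copy (f := f) (s := s) (s 1) n).symm

lemma lift_copy (n t : ℕ) : FreeGroup.lift (generatorValue f) (copy n t) = f n := by
  simp [copy, generatorValue]

lemma lift_invCopy (n t : ℕ) : FreeGroup.lift (generatorValue f) (invCopy n t) = (f n)⁻¹ := by
  have hodd : ¬Even (2 * Nat.pair n t + 1) := by simp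
  simp [invCopy, generatorValue, hodd, Nat.mul_add_div]

lemma lift_eq_one_of_mem_relators (hs : RightInverse s f) {w : FreeGroup ℕ}
    (hw : w ∈ relators f s) : FreeGroup.lift (generatorValue f) w = 1 := by
  rcases hw with ⟨n, t, rfl⟩ | ⟨n, t, rfl⟩ | ⟨m, n, rfl⟩
  · rw [map_mul, lift_copy, lift_invCopy, mul_inv_cancel]
  · rw [map_mul, lift_copy, lift_invCopy, inv_mul_cancel]
  · rw [tableRelator, map_mul, map_mul, lift_copy, lift_copy, lift_invCopy, hs, mul_inv_cancel]

def toGroup (hs : RightInverse s f) : PresentedGroup (relators f s) →* G :=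
  PresentedGroup.toGroup fun _ => lift_eq_one_of_mem_relators hs

def ofGroup (hs : RightInverse s f) : G →* PresentedGroup (relators f s) :=
  MonoidHom.mk' (fun g => mk (copy (s g) 0)) fun a b => by
    rw [mk_copy_mul_mk_copy, hs a, hs b]

lemma toGroup_ofGroup (hs : RightInverse s f) (g : G) : toGroup hs (ofGroup hs g) = g :=
  (lift_copy _ _).trans (hs g)

lemma ofGroup_toGroup_of (hs : RightInverse s f) (i : ℕ) :
    ofGroup hs (toGroup hs (PresentedGroup.of i)) = PresentedGroup.of i := by
  obtain ⟨p, rfl | rfl⟩ := Nat.even_or_odd' i <;> rw [← Nat.pair_unpair p]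
  · change ofGroup hs (FreeGroup.lift (generatorValue f) (copy _ _)) = mk (copy _ _)
    rw [lift_copy, mk_copy]
    exact mk_copy_section hs _
  · change ofGroup hs (FreeGroup.lift (generatorValue f) (invCopy _ _)) = mk (invCopy _ _)
    rw [lift_invCopy, map_inv, mk_invCopy, mk_copy]
    exact congrArg _ (mk_copy_section hs _)

def mulEquiv (hs : RightInverse s f) : G ≃* PresentedGroup (relators f s) :=
  (ofGroup hs).toMulEquiv (toGroup hs) (MonoidHom.ext (toGroup_ofGroup hs))
    (PresentedGroup.ext (ofGroup_toGroup_of hs))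

end Presentation

end CountablePresentation

/-- Every countable group is presented by a set `R` of positive words of length at most 3 in
the free group on generators `gₙ, n ∈ ℕ`, such that each generator `gₙ` occurs in at most
four relators of `R`. -/
theorem countable_group_presentation_four_occurrences
    (G : Type) [Group G] [Countable G] :
    ∃ R : Set (FreeGroup ℕ),
      (∀ w ∈ R, IsPosWordLen3 w) ∧
      (∀ i, {w ∈ R | Occurs i w}.Finite ∧ {w ∈ R | Occurs i w}.ncard ≤ 4) ∧
      Nonempty (G ≃* FreeGroup ℕ ⧸ Subgroup.normalClosure R) := by
  obtain ⟨f, hf⟩ := exists_surjective_nat G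
  let s := Function.surjInv hf
  refine ⟨CountablePresentation.relators f s,
    fun _ => CountablePresentation.isPosWordLen3_of_mem_relators, fun i => ?_,
    ⟨CountablePresentation.mulEquiv (Function.rightInverse_surjInv hf)⟩⟩
  obtain ⟨hfinite, hcard⟩ := CountablePresentation.occurrences_finite_and_ncard_le_three f s i
  exact ⟨hfinite, hcard.trans (by norm_num)⟩
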